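/- arXiv:1107.4576 — 3 statements merged into one kernel-verified Lean document; each statement's English description precedes it below -/
import Mathlib

section
/- Let U ⊆ ℝ^N be open, K ⋐ U, and let (f_n) be a sequence in 𝒞(U) converging uniformly on K. If (φ_n) is a delta sequence with s(φ_n) < ε for all n, then (f_n − f_n∗φ_n) converges uniformly to 0 on K^{-ε}. -/
open MeasureTheory Filter Topology Metric Pointwise

noncomputable section

/-- `ℝ^N` with the Euclidean metric. -/
abbrev Euc (N : ℕ) : Type := EuclideanSpace ℝ (Fin N)

/-- `𝒟`: smooth real-valued functions with compact support on `ℝ^N`. -/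
def IsTest {N : ℕ} (φ : Euc N → ℝ) : Prop :=
  ContDiff ℝ (⊤ : ℕ∞) φ ∧ HasCompactSupport φ

/-- `s(φ) = inf {ε > 0 : supp φ ⊆ B_ε}`. -/
def sRad {N : ℕ} (φ : Euc N → ℝ) : ℝ :=
  sInf {ε : ℝ | 0 < ε ∧ tsupport φ ⊆ ball (0 : Euc N) ε}

/-- `𝒟₀`: test functions that are nonnegative with integral 1. -/
def IsD0 {N : ℕ} (φ : Euc N → ℝ) : Prop :=
  IsTest φ ∧ (∀ x, 0 ≤ φ x) ∧ (∫ x, φ x) = 1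

/-- Delta sequences: sequences in `𝒟₀` with `s(φ_n) → 0`. -/
def IsDeltaSeq {N : ℕ} (φ : ℕ → Euc N → ℝ) : Prop :=
  (∀ n, IsD0 (φ n)) ∧ Tendsto (fun n => sRad (φ n)) atTop (𝓝 0)

/-- Convolution `(f∗φ)(x) = ∫ f(x−y)φ(y) dy` (with the convention that the
integrand vanishes wherever `φ` does). -/
def convol {N : ℕ} (f φ : Euc N → ℝ) : Euc N → ℝ :=
  fun x => ∫ y, f (x - y) * φ y

/-- `A^{-ε} = (closure (Aᶜ + B_ε))ᶜ`. -/
def erode {N : ℕ} (A : Set (Euc N)) (ε : ℝ) : Set (Euc N) :=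
  (closure (Aᶜ + ball (0 : Euc N) ε))ᶜ

/-- `‖f‖_K`, the sup of `|f|` over `K`. -/
def supNormOn {N : ℕ} (f : Euc N → ℝ) (K : Set (Euc N)) : ℝ :=
  ⨆ x ∈ K, |f x|

/-- Fundamental sequence on `U`: a sequence of continuous functions such that for
every compact `K ⊆ U` there is a delta sequence `δ` with `(f_n∗δ_m)_n` uniformly
convergent on `K` for every `m` (all but finitely many `m`, per the paper's
convention on definedness of the convolutions). -/
def IsFundamental {N : ℕ} (f : ℕ → Euc N → ℝ) (U : Set (Euc N)) : Prop :=
  (∀ n, ContinuousOn (f n) U) ∧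
  ∀ K : Set (Euc N), IsCompact K → K ⊆ U →
    ∃ δ : ℕ → Euc N → ℝ, IsDeltaSeq δ ∧ ∃ m₀ : ℕ, ∀ m ≥ m₀,
      ∃ g : Euc N → ℝ, TendstoUniformlyOn (fun n => convol (f n) (δ m)) g atTop K

/-- `(f_n) ∼ (g_n)` on `U`: for every compact `K ⊆ U` there is a delta sequence `φ`
with `(f_n − g_n)∗φ_m ⇉ 0` on `K` as `n → ∞`, for every (sufficiently large) `m`. -/
def SimTo {N : ℕ} (f g : ℕ → Euc N → ℝ) (U : Set (Euc N)) : Prop :=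
  ∀ K : Set (Euc N), IsCompact K → K ⊆ U →
    ∃ φ : ℕ → Euc N → ℝ, IsDeltaSeq φ ∧ ∃ m₀ : ℕ, ∀ m ≥ m₀,
      TendstoUniformlyOn (fun n => convol (fun y => f n y - g n y) (φ m)) 0 atTop K

lemma tsupport_subset_ball_of_sRad_lt {N : ℕ} {φ : Euc N → ℝ} (hφ : HasCompactSupport φ)
    {r : ℝ} (hr : sRad φ < r) : tsupport φ ⊆ ball (0 : Euc N) r := by
  obtain ⟨R, hR, hRsub⟩ := hφ.isBounded.subset_ball_lt 0 0
  have hne : Set.Nonempty {ε : ℝ | 0 < ε ∧ tsupport φ ⊆ ball (0 : Euc N) ε} := ⟨R, hR, hRsub⟩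
  obtain ⟨s, hsmem, hsr⟩ := exists_lt_of_csInf_lt hne hr
  exact hsmem.2.trans (ball_subset_ball hsr.le)

lemma mem_of_mem_erode {N : ℕ} {K : Set (Euc N)} {ε : ℝ} {x : Euc N}
    (hx : x ∈ erode K ε) {y : Euc N} (hy : ‖y‖ < ε) : x - y ∈ K := by
  by_contra h
  apply hx
  apply subset_closure
  have := Set.add_mem_add (show x - y ∈ Kᶜ from h) (mem_ball_zero_iff.2 hy)
  simpa using this

/-- If `U ⊆ ℝ^N` is open, `K ⋐ U`, `(f_n) ⊆ 𝒞(U)` converges uniformly on `K`, and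
`(φ_n)` is a delta sequence with `s(φ_n) < ε` for all `n`, then
`f_n − f_n∗φ_n ⇉ 0` on `K^{-ε}`. -/
theorem seqconv {N : ℕ} (U : Set (Euc N)) (hU : IsOpen U)
    (K : Set (Euc N)) (hK : IsCompact K) (hKU : K ⊆ U)
    (f : ℕ → Euc N → ℝ) (hf : ∀ n, ContinuousOn (f n) U)
    (g : Euc N → ℝ) (hconv : TendstoUniformlyOn f g atTop K)
    (ε : ℝ) (hε : 0 < ε)
    (φ : ℕ → Euc N → ℝ) (hφ : IsDeltaSeq φ) (hs : ∀ n, sRad (φ n) < ε) :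
    TendstoUniformlyOn (fun n x => f n x - convol (f n) (φ n) x) 0 atTop (erode K ε) := by
  obtain ⟨hφ0, hφlim⟩ := hφ
  have hcφ : ∀ n, Continuous (φ n) := fun n => ((hφ0 n).1.1).continuous
  have hcs : ∀ n, HasCompactSupport (φ n) := fun n => (hφ0 n).1.2
  have hnn : ∀ n y, 0 ≤ φ n y := fun n => (hφ0 n).2.1
  have hint1 : ∀ n, (∫ y, φ n y) = 1 := fun n => (hφ0 n).2.2
  have hball : ∀ n, tsupport (φ n) ⊆ ball (0 : Euc N) ε := fun n =>
    tsupport_subset_ball_of_sRad_lt (hcs n) (hs n)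
  have hEK : ∀ x ∈ erode K ε, x ∈ K := by
    intro x hx
    have := mem_of_mem_erode hx (y := 0) (by simpa using hε)
    simpa using this
  -- continuity and integrability of the convolution integrand
  have hcont : ∀ n, ∀ x ∈ erode K ε, Continuous (fun y => f n (x - y) * φ n y) := by
    intro n x hx
    rw [continuous_iff_continuousAt]
    intro y
    by_cases hy : y ∈ tsupport (φ n)
    · have hxyK : x - y ∈ K := mem_of_mem_erode hx (mem_ball_zero_iff.1 (hball n hy))
      have hfc : ContinuousAt (f n) (x - y) := (hf n).continuousAt (hU.mem_nhds (hKU hxyK))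
      exact (hfc.comp ((continuous_const.sub continuous_id).continuousAt)).mul
        (hcφ n).continuousAt
    · have hev : ∀ᶠ z in 𝓝 y, (0 : ℝ) = f n (x - z) * φ n z := by
        filter_upwards [(isClosed_tsupport (φ n)).isOpen_compl.mem_nhds hy] with z hz
        simp [image_eq_zero_of_notMem_tsupport hz]
      exact continuousAt_const.congr hev
  have hcsupp : ∀ n x, HasCompactSupport (fun y => f n (x - y) * φ n y) :=
    fun n x => HasCompactSupport.mul_left (hcs n)
  have hinteg : ∀ n, ∀ x ∈ erode K ε, Integrable (fun y => f n (x - y) * φ n y) := by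
    intro n x hx
    exact (hcont n x hx).integrable_of_hasCompactSupport (hcsupp n x)
  have hintφ : ∀ n, Integrable (φ n) := fun n =>
    (hcφ n).integrable_of_hasCompactSupport (hcs n)
  -- key identity
  have key : ∀ n, ∀ x ∈ erode K ε,
      f n x - convol (f n) (φ n) x = ∫ y, (f n x - f n (x - y)) * φ n y := by
    intro n x hx
    have h1 : (∫ y, (f n x - f n (x - y)) * φ n y)
        = (∫ y, f n x * φ n y) - ∫ y, f n (x - y) * φ n y := by
      rw [← integral_sub ((hintφ n).const_mul (f n x)) (hinteg n x hx)]
      congr 1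
      ext y
      ring
    rw [h1, integral_const_mul, hint1 n, mul_one]
    rfl
  -- uniform continuity of g on K
  have hgK : ContinuousOn g K :=
    hconv.continuousOn (Eventually.of_forall fun n => (hf n).mono hKU).frequently
  have hgu : UniformContinuousOn g K := hK.uniformContinuousOn_of_continuous hgK
  rw [Metric.tendstoUniformlyOn_iff]
  intro η hη
  obtain ⟨δ, hδ, hδ'⟩ := (Metric.uniformContinuousOn_iff).1 hgu (η/4) (by positivity)
  have h1 : ∀ᶠ n in atTop, ∀ x ∈ K, dist (g x) (f n x) < η/4 :=
    (Metric.tendstoUniformlyOn_iff.1 hconv) (η/4) (by positivity)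
  have h2 : ∀ᶠ n in atTop, sRad (φ n) < δ := hφlim.eventually_lt_const hδ
  filter_upwards [h1, h2] with n hn1 hn2
  intro x hx
  have hxK : x ∈ K := hEK x hx
  have hballδ : tsupport (φ n) ⊆ ball (0 : Euc N) δ :=
    tsupport_subset_ball_of_sRad_lt (hcs n) hn2
  -- pointwise bound on the integrand
  have hb : ∀ y, |(f n x - f n (x - y)) * φ n y| ≤ (3 * (η/4)) * φ n y := by
    intro y
    by_cases hy : y ∈ tsupport (φ n)
    · rw [abs_mul, abs_of_nonneg (hnn n y)]
      refine mul_le_mul_of_nonneg_right ?_ (hnn n y)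
      have hxyK : x - y ∈ K := mem_of_mem_erode hx (mem_ball_zero_iff.1 (hball n hy))
      have hd1 : dist (g x) (f n x) < η/4 := hn1 x hxK
      have hd3 : dist (g (x - y)) (f n (x - y)) < η/4 := hn1 _ hxyK
      have hdxy : dist x (x - y) < δ := by
        rw [dist_eq_norm, sub_sub_cancel]
        exact mem_ball_zero_iff.1 (hballδ hy)
      have hd2 : dist (g x) (g (x - y)) < η/4 := hδ' x hxK (x - y) hxyK hdxy
      have : dist (f n x) (f n (x - y)) ≤
          dist (f n x) (g x) + dist (g x) (g (x - y)) + dist (g (x - y)) (f n (x - y)) :=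
        dist_triangle4 _ _ _ _
      rw [dist_comm (f n x) (g x)] at this
      have habs : |f n x - f n (x - y)| = dist (f n x) (f n (x - y)) := (Real.dist_eq _ _).symm
      rw [habs]
      linarith
    · simp [image_eq_zero_of_notMem_tsupport hy]
  -- conclude
  have hIabs : |∫ y, (f n x - f n (x - y)) * φ n y| ≤ 3 * (η/4) := by
    have hI1 : Integrable (fun y => (f n x - f n (x - y)) * φ n y) := by
      have h := ((hintφ n).const_mul (f n x)).sub (hinteg n x hx)
      refine h.congr (Eventually.of_forall fun y => ?_)
      simp [sub_mul]
    calc |∫ y, (f n x - f n (x - y)) * φ n y|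
        = ‖∫ y, (f n x - f n (x - y)) * φ n y‖ := (Real.norm_eq_abs _).symm
      _ ≤ ∫ y, ‖(f n x - f n (x - y)) * φ n y‖ :=
          norm_integral_le_integral_norm _
      _ ≤ ∫ y, (3 * (η/4)) * φ n y :=
          integral_mono hI1.norm ((hintφ n).const_mul _)
            (fun y => by rw [Real.norm_eq_abs]; exact hb y)
      _ = 3 * (η/4) := by rw [integral_const_mul, hint1 n, mul_one]
  have : dist (0 : ℝ) (f n x - convol (f n) (φ n) x) < η := by
    rw [Real.dist_eq, key n x hx]
    have : |(0:ℝ) - ∫ y, (f n x - f n (x - y)) * φ n y|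
        = |∫ y, (f n x - f n (x - y)) * φ n y| := by rw [zero_sub, abs_neg]
    rw [this]
    linarith
  simpa using this
end
end

section
/- Let U ⊆ ℝ^N be open, ε > 0 with U^{-ε} nonempty, φ ∈ 𝒟₀ with s(φ) < ε. If (f_n), (g_n) ∈ 𝒜(U) and (f_n) ∼ (g_n) in 𝒜(U), then (f_n∗φ) ∼ (g_n∗φ) in 𝒜(U^{-ε}). -/
open MeasureTheory Filter Topology Metric Pointwise

noncomputable section

lemma erode_sub_mem {N : ℕ} {U : Set (Euc N)} {ε : ℝ} {x : Euc N} (hx : x ∈ erode U ε)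
    {z : Euc N} (hz : ‖z‖ < ε) : x - z ∈ U := by
  by_contra h
  exact hx (subset_closure ⟨x - z, h, z, mem_ball_zero_iff.2 hz, sub_add_cancel x z⟩)

lemma sRad_set_nonempty {N : ℕ} {φ : Euc N → ℝ} (h : HasCompactSupport φ) :
    {ε : ℝ | 0 < ε ∧ tsupport φ ⊆ ball (0 : Euc N) ε}.Nonempty := by
  obtain ⟨R, hR, hsub⟩ := h.isBounded.subset_ball_lt 0 0
  exact ⟨R, hR, hsub⟩

lemma tsupport_subset_closedBall_sRad {N : ℕ} {φ : Euc N → ℝ} (h : HasCompactSupport φ) :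
    tsupport φ ⊆ closedBall 0 (sRad φ) := by
  intro x hx
  rw [mem_closedBall, dist_zero_right]
  exact le_csInf (sRad_set_nonempty h)
    (fun b hb => le_of_lt (mem_ball_zero_iff.1 (hb.2 hx)))

lemma aux_cont {N : ℕ} {U : Set (Euc N)} (hU : IsOpen U) {f ψ : Euc N → ℝ}
    (hf : ContinuousOn f U) (hψ : Continuous ψ) (hcψ : HasCompactSupport ψ)
    (w : Euc N) (hw : ∀ z ∈ tsupport ψ, w - z ∈ U) :
    Integrable (fun z => f (w - z) * ψ z) := by
  have hcont : Continuous (fun z => f (w - z) * ψ z) := by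
    rw [continuous_iff_continuousAt]
    intro z
    by_cases hz : w - z ∈ U
    · exact ((hf.continuousAt (hU.mem_nhds hz)).comp
        ((continuous_const.sub continuous_id).continuousAt)).mul hψ.continuousAt
    · have hz' : z ∉ tsupport ψ := fun h => hz (hw z h)
      have h0 : (fun _ : Euc N => (0:ℝ)) =ᶠ[𝓝 z] (fun z' => f (w - z') * ψ z') := by
        filter_upwards [(isClosed_tsupport ψ).isOpen_compl.mem_nhds hz'] with z' hz'
        rw [image_eq_zero_of_notMem_tsupport hz', mul_zero]
      exact continuousAt_const.congr h0
  exact hcont.integrable_of_hasCompactSupport (hcψ.mul_left)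

lemma aux_cont2 {N : ℕ} {U : Set (Euc N)} (hU : IsOpen U) {f ψ χ : Euc N → ℝ}
    (hf : ContinuousOn f U) (hψ : Continuous ψ) (hχ : Continuous χ)
    (hcψ : HasCompactSupport ψ) (hcχ : HasCompactSupport χ)
    (x : Euc N) (hx : ∀ y ∈ tsupport χ, ∀ z ∈ tsupport ψ, x - y - z ∈ U) :
    Integrable (fun p : Euc N × Euc N => f (x - p.1 - p.2) * ψ p.2 * χ p.1) := by
  set F := fun p : Euc N × Euc N => f (x - p.1 - p.2) * ψ p.2 * χ p.1 with hF
  have hcont : Continuous F := by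
    rw [continuous_iff_continuousAt]
    intro p
    by_cases hp : x - p.1 - p.2 ∈ U
    · have hmap : ContinuousAt (fun q : Euc N × Euc N => x - q.1 - q.2) p :=
        ((continuous_const.sub continuous_fst).sub continuous_snd).continuousAt
      have h1 : ContinuousAt (fun q : Euc N × Euc N => f (x - q.1 - q.2)) p := by
        have := ContinuousAt.comp (f := fun q : Euc N × Euc N => x - q.1 - q.2)
          (hf.continuousAt (hU.mem_nhds hp)) hmap
        exact this
      have h2 : ContinuousAt (fun q : Euc N × Euc N => ψ q.2) p :=
        (hψ.comp continuous_snd).continuousAt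
      have h3 : ContinuousAt (fun q : Euc N × Euc N => χ q.1) p :=
        (hχ.comp continuous_fst).continuousAt
      exact (h1.mul h2).mul h3
    · have : p.1 ∉ tsupport χ ∨ p.2 ∉ tsupport ψ := by
        by_contra h
        push_neg at h
        exact hp (hx p.1 h.1 p.2 h.2)
      rcases this with h | h
      · have h0 : (fun _ : Euc N × Euc N => (0:ℝ)) =ᶠ[𝓝 p] F := by
          filter_upwards [((isClosed_tsupport χ).isOpen_compl.preimage continuous_fst).mem_nhds h]
            with q hq
          rw [hF]; simp only
          rw [image_eq_zero_of_notMem_tsupport hq, mul_zero]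
        exact continuousAt_const.congr h0
      · have h0 : (fun _ : Euc N × Euc N => (0:ℝ)) =ᶠ[𝓝 p] F := by
          filter_upwards [((isClosed_tsupport ψ).isOpen_compl.preimage continuous_snd).mem_nhds h]
            with q hq
          rw [hF]; simp only
          rw [image_eq_zero_of_notMem_tsupport hq, mul_zero, zero_mul]
        exact continuousAt_const.congr h0
  have hsupp : HasCompactSupport F := by
    apply HasCompactSupport.intro ((hcχ.prod hcψ) : IsCompact (tsupport χ ×ˢ tsupport ψ))
    intro p hp
    rw [Set.mem_prod] at hp
    push_neg at hp
    by_cases h1 : p.1 ∈ tsupport χ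
    · rw [hF]; simp only
      rw [image_eq_zero_of_notMem_tsupport (hp h1), mul_zero, zero_mul]
    · rw [hF]; simp only
      rw [image_eq_zero_of_notMem_tsupport h1, mul_zero]
  exact hcont.integrable_of_hasCompactSupport hsupp

/-- If `U ⊆ ℝ^N` is open, `ε > 0` with `U^{-ε}` nonempty, `φ ∈ 𝒟₀`, `s(φ) < ε`,
and `(f_n) ∼ (g_n)` in `𝒜(U)`, then `(f_n∗φ) ∼ (g_n∗φ)` in `𝒜(U^{-ε})`. -/
theorem convol_sim {N : ℕ} (U : Set (Euc N)) (hU : IsOpen U)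
    (ε : ℝ) (hε : 0 < ε) (hne : (erode U ε).Nonempty)
    (φ : Euc N → ℝ) (hφ : IsD0 φ) (hs : sRad φ < ε)
    (f g : ℕ → Euc N → ℝ) (hf : IsFundamental f U) (hg : IsFundamental g U)
    (hfg : SimTo f g U) :
    SimTo (fun n => convol (f n) φ) (fun n => convol (g n) φ) (erode U ε) := by
  intro K hK hKU
  obtain ⟨r, ⟨hr0, hrsupp⟩, hrε⟩ :=
    exists_lt_of_csInf_lt (sRad_set_nonempty hφ.1.2) hs
  set K' : Set (Euc N) := (fun p : Euc N × Euc N => p.1 - p.2) '' (K ×ˢ tsupport φ) with hK'def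
  have hK'c : IsCompact K' := (hK.prod hφ.1.2).image (continuous_fst.sub continuous_snd)
  have hK'U : K' ⊆ U := by
    rintro _ ⟨⟨x, z⟩, ⟨hx, hz⟩, rfl⟩
    exact erode_sub_mem (hKU hx) (lt_trans (mem_ball_zero_iff.1 (hrsupp hz)) hrε)
  obtain ⟨δ, hδ, m₀, hm₀⟩ := hfg K' hK'c hK'U
  obtain ⟨m₁, hm₁⟩ := Filter.eventually_atTop.1
    (hδ.2.eventually_lt_const (show (0:ℝ) < ε - r by linarith))
  refine ⟨δ, hδ, max m₀ m₁, fun m hm => ?_⟩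
  have hδm := hδ.1 m
  have hδcont : Continuous (δ m) := hδm.1.1.continuous
  have hδc : HasCompactSupport (δ m) := hδm.1.2
  have hδsupp : tsupport (δ m) ⊆ closedBall 0 (sRad (δ m)) :=
    tsupport_subset_closedBall_sRad hδc
  have hsm : sRad (δ m) < ε - r := hm₁ m (le_trans (le_max_right _ _) hm)
  have hφcont : Continuous φ := hφ.1.1.continuous
  have hφc : HasCompactSupport φ := hφ.1.2
  have huc := hm₀ m (le_trans (le_max_left _ _) hm)
  rw [Metric.tendstoUniformlyOn_iff] at huc ⊢
  intro η hη
  filter_upwards [huc (η/2) (by linarith)] with n hn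
  intro x hx
  set d : Euc N → ℝ := fun y => f n y - g n y with hd
  have hdcont : ContinuousOn d U := (hf.1 n).sub (hg.1 n)
  have hUmem : ∀ y ∈ tsupport (δ m), ∀ z ∈ tsupport φ, x - y - z ∈ U := by
    intro y hy z hz
    have hyn : ‖y‖ ≤ sRad (δ m) := mem_closedBall_zero_iff.1 (hδsupp hy)
    have hzn : ‖z‖ < r := mem_ball_zero_iff.1 (hrsupp hz)
    have hmem : x - (y + z) ∈ U := erode_sub_mem (hKU hx)
      (lt_of_le_of_lt (norm_add_le y z) (by linarith))
    simpa [sub_sub] using hmem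
  have hF' : Integrable (Function.uncurry fun y z => d (x - y - z) * φ z * δ m y)
      ((volume : Measure (Euc N)).prod volume) := by
    rw [← Measure.volume_eq_prod]
    exact aux_cont2 hU hdcont hφcont hδcont hφc hδc x hUmem
  have inner_eq : ∀ z, (∫ y, d (x - y - z) * φ z * δ m y) = φ z * convol d (δ m) (x - z) := by
    intro z
    simp only [convol]
    rw [← integral_const_mul]
    refine integral_congr_ae (Filter.Eventually.of_forall fun y => ?_)
    show d (x - y - z) * φ z * δ m y = φ z * (d (x - z - y) * δ m y)
    rw [sub_right_comm x y z]; ring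
  have key : convol (fun y => convol (f n) φ y - convol (g n) φ y) (δ m) x
      = ∫ z, φ z * convol d (δ m) (x - z) := by
    have step1 : convol (fun y => convol (f n) φ y - convol (g n) φ y) (δ m) x
        = ∫ y, ∫ z, d (x - y - z) * φ z * δ m y := by
      simp only [convol]
      refine integral_congr_ae (Filter.Eventually.of_forall fun y => ?_)
      by_cases hy : δ m y = 0
      · simp [hy]
      · beta_reduce
        have hyts : y ∈ tsupport (δ m) := subset_tsupport _ hy
        have hwU : ∀ z ∈ tsupport φ, x - y - z ∈ U := fun z hz => hUmem y hyts z hz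
        have I1 : Integrable (fun z => f n (x - y - z) * φ z) :=
          aux_cont hU (hf.1 n) hφcont hφc _ hwU
        have I2 : Integrable (fun z => g n (x - y - z) * φ z) :=
          aux_cont hU (hg.1 n) hφcont hφc _ hwU
        rw [← integral_sub I1 I2, ← integral_mul_const]
        refine integral_congr_ae (Filter.Eventually.of_forall fun z => ?_)
        show (f n (x - y - z) * φ z - g n (x - y - z) * φ z) * δ m y = d (x - y - z) * φ z * δ m y
        simp only [hd]; ring
    have step2 : (∫ y, ∫ z, d (x - y - z) * φ z * δ m y)
        = ∫ z, ∫ y, d (x - y - z) * φ z * δ m y :=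
      integral_integral_swap hF'
    rw [step1, step2]
    exact integral_congr_ae (Filter.Eventually.of_forall inner_eq)
  have hbnd : ∀ z, ‖φ z * convol d (δ m) (x - z)‖ ≤ (η/2) * φ z := by
    intro z
    rcases eq_or_ne (φ z) 0 with hz | hz
    · simp [hz]
    · have hzts : z ∈ tsupport φ := subset_tsupport _ hz
      have hmem : x - z ∈ K' := ⟨(x, z), ⟨hx, hzts⟩, rfl⟩
      have h2 := hn (x - z) hmem
      rw [Pi.zero_apply, dist_zero_left] at h2
      rw [norm_mul, Real.norm_eq_abs (φ z), abs_of_nonneg (hφ.2.1 z), mul_comm]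
      exact mul_le_mul_of_nonneg_right h2.le (hφ.2.1 z)
  have hφint : Integrable φ := hφcont.integrable_of_hasCompactSupport hφc
  simp only [Pi.zero_apply, dist_zero_left]
  calc ‖convol (fun y => convol (f n) φ y - convol (g n) φ y) (δ m) x‖
      = ‖∫ z, φ z * convol d (δ m) (x - z)‖ := by rw [key]
    _ ≤ ∫ z, (η/2) * φ z :=
        norm_integral_le_of_norm_le (hφint.const_mul _) (Filter.Eventually.of_forall hbnd)
    _ = (η/2) * ∫ z, φ z := integral_const_mul _ _
    _ = η/2 := by rw [hφ.2.2, mul_one]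
    _ < η := by linarith
end
end

section
/- Let U ⊆ ℝ^N be open and let (U_n) be an increasing sequence of open sets with ⋃_n U_n = U and closure(U_n) ⋐ U_{n+1} for each n. Let (f_k) ∈ 𝒜(U). Then there exists a delta sequence (φ_n) such that for each n there is h_n ∈ 𝒞(closure(U_n)) with (f_k∗φ_n)_k ∼ (h_n, h_n, …) on U_n (i.e. the Boehmian F∗φ_n equals the continuous function h_n there); and for ANY sequence (g_n) in 𝒞(U) such that g_n = h_n on closure(U_n) for each n (continuous extensions of F∗φ_n to U), the sequence (g_n) is fundamental on U and (g_n) ∼ (f_k). -/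
open MeasureTheory Filter Topology Metric Pointwise

noncomputable section

lemma sRad_nonneg {N : ℕ} (φ : Euc N → ℝ) : 0 ≤ sRad φ :=
  Real.sInf_nonneg fun _ hx => hx.1.le

lemma tsupport_subset_ball {N : ℕ} {φ : Euc N → ℝ} (h : HasCompactSupport φ) {r : ℝ}
    (hr : sRad φ < r) : tsupport φ ⊆ ball 0 r := by
  obtain ⟨R, hR0, hR⟩ := h.isBounded.subset_ball_lt 0 0
  have hne : {ε : ℝ | 0 < ε ∧ tsupport φ ⊆ ball (0 : Euc N) ε}.Nonempty := ⟨R, hR0, hR⟩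
  obtain ⟨ε, hε, hεr⟩ := exists_lt_of_csInf_lt hne hr
  exact hε.2.trans (ball_subset_ball hεr.le)

lemma cont_glue {α : Type*} [TopologicalSpace α] {u : α → ℝ} {A C : Set α}
    (hA : IsOpen A) (hC : IsClosed C) (hCA : C ⊆ A)
    (hu : ContinuousOn u A) (h0 : ∀ p, p ∉ C → u p = 0) : Continuous u := by
  rw [continuous_iff_continuousAt]
  intro p
  by_cases hp : p ∈ A
  · exact hu.continuousAt (hA.mem_nhds hp)
  · have hpC : p ∉ C := fun hmem => hp (hCA hmem)
    have hev : ∀ᶠ q in 𝓝 p, u q = 0 := by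
      filter_upwards [hC.isOpen_compl.mem_nhds hpC] with q hq using h0 q hq
    exact Filter.EventuallyEq.continuousAt hev

lemma integrand_cont {N : ℕ} {F ψ : Euc N → ℝ} {V : Set (Euc N)} (hV : IsOpen V)
    (hF : ContinuousOn F V) (hψc : Continuous ψ) (hψs : HasCompactSupport ψ) {x : Euc N}
    (hx : ∀ y ∈ tsupport ψ, x - y ∈ V) :
    Continuous (fun y => F (x - y) * ψ y) ∧ HasCompactSupport (fun y => F (x - y) * ψ y) := by
  constructor
  · apply cont_glue (A := (fun y => x - y) ⁻¹' V) (C := tsupport ψ)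
    · exact hV.preimage (continuous_const.sub continuous_id)
    · exact isClosed_tsupport ψ
    · exact fun y hy => hx y hy
    · exact (hF.comp (continuous_const.sub continuous_id).continuousOn
        (fun y hy => hy)).mul hψc.continuousOn
    · intro p hp; rw [image_eq_zero_of_notMem_tsupport hp, mul_zero]
  · exact HasCompactSupport.intro hψs fun p hp => by
      rw [image_eq_zero_of_notMem_tsupport hp, mul_zero]

lemma integrand_integrable {N : ℕ} {F ψ : Euc N → ℝ} {V : Set (Euc N)} (hV : IsOpen V)
    (hF : ContinuousOn F V) (hψc : Continuous ψ) (hψs : HasCompactSupport ψ) {x : Euc N}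
    (hx : ∀ y ∈ tsupport ψ, x - y ∈ V) :
    Integrable (fun y => F (x - y) * ψ y) := by
  obtain ⟨h1, h2⟩ := integrand_cont hV hF hψc hψs hx
  exact h1.integrable_of_hasCompactSupport h2

lemma abs_integral_mul_le {N : ℕ} {Φ ψ : Euc N → ℝ} {M : ℝ}
    (hψc : Continuous ψ) (hψs : HasCompactSupport ψ) (hψ0 : ∀ y, 0 ≤ ψ y)
    (hψ1 : (∫ y, ψ y) = 1) (hint : Integrable (fun y => Φ y * ψ y))
    (hM0 : 0 ≤ M) (hM : ∀ y ∈ tsupport ψ, |Φ y| ≤ M) :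
    |∫ y, Φ y * ψ y| ≤ M := by
  have hψi : Integrable ψ := hψc.integrable_of_hasCompactSupport hψs
  have h1 : |∫ y, Φ y * ψ y| ≤ ∫ y, |Φ y * ψ y| := by
    simpa only [Real.norm_eq_abs] using norm_integral_le_integral_norm (fun y => Φ y * ψ y)
  have h2 : (∫ y, |Φ y * ψ y|) ≤ ∫ y, M * ψ y := by
    apply integral_mono_of_nonneg
    · exact Filter.Eventually.of_forall fun y => abs_nonneg _
    · exact hψi.const_mul M
    · apply Filter.Eventually.of_forall
      intro y
      show |Φ y * ψ y| ≤ M * ψ y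
      by_cases hy : y ∈ tsupport ψ
      · rw [abs_mul, abs_of_nonneg (hψ0 y)]
        exact mul_le_mul_of_nonneg_right (hM y hy) (hψ0 y)
      · rw [image_eq_zero_of_notMem_tsupport hy, mul_zero, abs_zero]
        positivity
  calc |∫ y, Φ y * ψ y| ≤ ∫ y, M * ψ y := h1.trans h2
  _ = M := by rw [integral_const_mul, hψ1, mul_one]

lemma abs_convol_le {N : ℕ} {F ψ : Euc N → ℝ} {x : Euc N} {M : ℝ}
    (hψc : Continuous ψ) (hψs : HasCompactSupport ψ) (hψ0 : ∀ y, 0 ≤ ψ y)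
    (hψ1 : (∫ y, ψ y) = 1)
    (hint : Integrable (fun y => F (x - y) * ψ y))
    (hM0 : 0 ≤ M) (hM : ∀ y ∈ tsupport ψ, |F (x - y)| ≤ M) :
    |convol F ψ x| ≤ M :=
  abs_integral_mul_le hψc hψs hψ0 hψ1 hint hM0 hM

lemma convol_sub {N : ℕ} {F G ψ : Euc N → ℝ} {x : Euc N}
    (hF : Integrable (fun y => F (x - y) * ψ y))
    (hG : Integrable (fun y => G (x - y) * ψ y)) :
    convol (fun y => F y - G y) ψ x = convol F ψ x - convol G ψ x := by
  unfold convol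
  rw [← integral_sub hF hG]
  congr 1; funext y; ring

lemma convol_congr {N : ℕ} {F G ψ : Euc N → ℝ} {x : Euc N}
    (h : ∀ y, ψ y ≠ 0 → F (x - y) = G (x - y)) : convol F ψ x = convol G ψ x := by
  unfold convol
  congr 1; funext y
  by_cases hy : ψ y = 0
  · rw [hy, mul_zero, mul_zero]
  · rw [h y hy]

lemma convol_const {N : ℕ} {ψ : Euc N → ℝ} (hψ1 : (∫ y, ψ y) = 1) (c : ℝ) (x : Euc N) :
    convol (fun _ => c) ψ x = c := by
  unfold convol
  rw [integral_const_mul, hψ1, mul_one]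

lemma convol_continuousOn {N : ℕ} {F ψ : Euc N → ℝ} {V S : Set (Euc N)} {r : ℝ}
    (hV : IsOpen V) (hF : ContinuousOn F V) (hψc : Continuous ψ) (hψs : HasCompactSupport ψ)
    (hψ0 : ∀ y, 0 ≤ ψ y) (hψ1 : (∫ y, ψ y) = 1)
    (hr : 0 < r) (hrψ : tsupport ψ ⊆ ball 0 r)
    (hS : ∀ x ∈ S, ∀ z, dist z x ≤ r → z ∈ V) : ContinuousOn (convol F ψ) S := by
  intro x₀ hx₀
  have hball : closedBall x₀ r ⊆ V := fun z hz => hS x₀ hx₀ z (mem_closedBall.mp hz)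
  obtain ⟨η, hη0, hηV⟩ := (isCompact_closedBall x₀ r).exists_cthickening_subset_open hV hball
  have hDV : closedBall x₀ (η + r) ⊆ V := by
    rw [← cthickening_closedBall hη0.le hr.le]
    exact hηV
  have hUC := (isCompact_closedBall x₀ (η + r)).uniformContinuousOn_of_continuous (hF.mono hDV)
  rw [Metric.uniformContinuousOn_iff] at hUC
  rw [Metric.continuousWithinAt_iff]
  intro ε hε
  obtain ⟨θ, hθ0, hθ⟩ := hUC (ε/2) (by positivity)
  refine ⟨min θ η, by positivity, fun x hxS hxd => ?_⟩
  have hmemx₀ : ∀ y ∈ tsupport ψ, x₀ - y ∈ closedBall x₀ (η + r) := by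
    intro y hy
    have hny : ‖y‖ < r := mem_ball_zero_iff.mp (hrψ hy)
    have : dist (x₀ - y) x₀ = ‖y‖ := by
      rw [dist_eq_norm]; simp
    rw [mem_closedBall, this]
    linarith [hη0.le]
  have hmemx : ∀ y ∈ tsupport ψ, x - y ∈ closedBall x₀ (η + r) := by
    intro y hy
    have hny : ‖y‖ < r := mem_ball_zero_iff.mp (hrψ hy)
    have h1 : dist (x - y) (x₀ - y) = dist x x₀ := by
      rw [dist_eq_norm, dist_eq_norm]; congr 1; abel
    calc dist (x - y) x₀ ≤ dist (x - y) (x₀ - y) + dist (x₀ - y) x₀ := dist_triangle _ _ _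
    _ = dist x x₀ + ‖y‖ := by rw [h1, dist_eq_norm]; congr 1; simp
    _ ≤ η + r := by
        have : dist x x₀ < η := lt_of_lt_of_le hxd (min_le_right _ _)
        linarith
  have hix := integrand_integrable hV hF hψc hψs (fun y hy => hDV (hmemx y hy))
  have hix₀ := integrand_integrable hV hF hψc hψs (fun y hy => hDV (hmemx₀ y hy))
  have key : convol F ψ x - convol F ψ x₀ = ∫ y, (F (x - y) - F (x₀ - y)) * ψ y := by
    unfold convol
    rw [← integral_sub hix hix₀]
    congr 1; funext y; ring
  have hb : |convol F ψ x - convol F ψ x₀| ≤ ε/2 := by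
    rw [key]
    apply abs_integral_mul_le hψc hψs hψ0 hψ1 ?_ (by positivity)
    · intro y hy
      have h1 : dist (x - y) (x₀ - y) = dist x x₀ := by
        rw [dist_eq_norm, dist_eq_norm]; congr 1; abel
      have := hθ (x - y) (hmemx y hy) (x₀ - y) (hmemx₀ y hy)
        (by rw [h1]; exact lt_of_lt_of_le hxd (min_le_left _ _))
      rw [Real.dist_eq] at this
      exact this.le
    · have := hix.sub hix₀
      apply this.congr
      apply Filter.Eventually.of_forall
      intro y; simp only [Pi.sub_apply]; ring
  rw [Real.dist_eq]
  exact lt_of_le_of_lt hb (by linarith)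

lemma tendsto_convol_of_unif {N : ℕ} {u : ℕ → Euc N → ℝ} {g ψ : Euc N → ℝ} {S V : Set (Euc N)}
    (hV : IsOpen V) (hu : ∀ k, ContinuousOn (u k) V) (hg : ContinuousOn g V)
    (hunif : TendstoUniformlyOn u g atTop S)
    (hψc : Continuous ψ) (hψs : HasCompactSupport ψ) (hψ0 : ∀ y, 0 ≤ ψ y)
    (hψ1 : (∫ y, ψ y) = 1)
    {x : Euc N} (hx : ∀ y ∈ tsupport ψ, x - y ∈ V ∧ x - y ∈ S) :
    Tendsto (fun k => convol (u k) ψ x) atTop (𝓝 (convol g ψ x)) := by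
  rw [Metric.tendsto_atTop]
  intro ε hε
  rw [Metric.tendstoUniformlyOn_iff] at hunif
  obtain ⟨k₀, hk₀⟩ := eventually_atTop.mp (hunif (ε/2) (by positivity))
  refine ⟨k₀, fun k hk => ?_⟩
  have hintu := integrand_integrable hV (hu k) hψc hψs (fun y hy => (hx y hy).1)
  have hintg := integrand_integrable hV hg hψc hψs (fun y hy => (hx y hy).1)
  have heq : convol (u k) ψ x - convol g ψ x = ∫ y, (u k (x - y) - g (x - y)) * ψ y := by
    unfold convol
    rw [← integral_sub hintu hintg]
    congr 1; funext y; ring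
  have hb : |convol (u k) ψ x - convol g ψ x| ≤ ε/2 := by
    rw [heq]
    apply abs_integral_mul_le hψc hψs hψ0 hψ1 ?_ (by positivity)
    · intro y hy
      have := hk₀ k hk (x - y) (hx y hy).2
      rw [Real.dist_eq, abs_sub_comm] at this
      exact this.le
    · have := hintu.sub hintg
      apply this.congr
      apply Filter.Eventually.of_forall
      intro y; simp only [Pi.sub_apply]; ring
  rw [Real.dist_eq]
  exact lt_of_le_of_lt hb (by linarith)

lemma convol_approx {N : ℕ} {G : Euc N → ℝ} {V K : Set (Euc N)} {r ε : ℝ}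
    (hV : IsOpen V) (hG : ContinuousOn G V) (hK : IsCompact K) (hr : 0 < r)
    (hKV : ∀ x ∈ K, ∀ z, dist z x ≤ r → z ∈ V) (hε : 0 < ε) :
    ∃ η > 0, ∀ ψ : Euc N → ℝ, Continuous ψ → HasCompactSupport ψ → (∀ y, 0 ≤ ψ y) →
      (∫ y, ψ y) = 1 → tsupport ψ ⊆ ball 0 (min r η) →
      ∀ x ∈ K, |convol G ψ x - G x| ≤ ε := by
  have hD : IsCompact (cthickening r K) := hK.cthickening
  have hDV : cthickening r K ⊆ V := by
    rw [hK.cthickening_eq_biUnion_closedBall hr.le]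
    intro z hz
    obtain ⟨x, hxK, hzx⟩ := Set.mem_iUnion₂.mp hz
    exact hKV x hxK z (mem_closedBall.mp hzx)
  have hUC := hD.uniformContinuousOn_of_continuous (hG.mono hDV)
  rw [Metric.uniformContinuousOn_iff] at hUC
  obtain ⟨η, hη0, hηm⟩ := hUC ε hε
  refine ⟨η, hη0, fun ψ hψc hψs hψ0 hψ1 hsup x hx => ?_⟩
  have hxV : ∀ y ∈ tsupport ψ, x - y ∈ V := by
    intro y hy
    have : ‖y‖ < min r η := mem_ball_zero_iff.mp (hsup hy)
    apply hKV x hx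
    rw [dist_eq_norm]
    have h2 : x - y - x = -y := by abel
    rw [h2, norm_neg]
    exact ((lt_min_iff.mp this).1).le
  have hint := integrand_integrable hV hG hψc hψs hxV
  have hψi : Integrable ψ := hψc.integrable_of_hasCompactSupport hψs
  have h2 : G x = ∫ y, G x * ψ y := by rw [integral_const_mul, hψ1, mul_one]
  have heq : convol G ψ x - G x = ∫ y, (G (x - y) - G x) * ψ y := by
    rw [h2]
    unfold convol
    rw [← integral_sub hint (hψi.const_mul (G x))]
    rw [← h2]
    rw [h2]
    congr 1; funext y; ring
  rw [heq]
  apply abs_integral_mul_le hψc hψs hψ0 hψ1 ?_ hε.le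
  · intro y hy
    have hny : ‖y‖ < min r η := mem_ball_zero_iff.mp (hsup hy)
    have hdist : dist (x - y) x = ‖y‖ := by
      rw [dist_eq_norm]
      have h3 : x - y - x = -y := by abel
      rw [h3, norm_neg]
    have hmem1 : x - y ∈ cthickening r K :=
      mem_cthickening_of_dist_le (x - y) x r K hx
        (by rw [hdist]; exact ((lt_min_iff.mp hny).1).le)
    have hmem2 : x ∈ cthickening r K := self_subset_cthickening K hx
    have := hηm (x - y) hmem1 x hmem2 (by rw [hdist]; exact (lt_min_iff.mp hny).2)
    rw [Real.dist_eq] at this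
    exact this.le
  · have := hint.sub (hψi.const_mul (G x))
    apply this.congr
    apply Filter.Eventually.of_forall
    intro y; simp only [Pi.sub_apply]; ring

lemma convol_convol_comm {N : ℕ} {F φ ψ : Euc N → ℝ} {V : Set (Euc N)}
    (hV : IsOpen V) (hF : ContinuousOn F V)
    (hφc : Continuous φ) (hφs : HasCompactSupport φ)
    (hψc : Continuous ψ) (hψs : HasCompactSupport ψ) {x : Euc N}
    (hx : ∀ y ∈ tsupport φ, ∀ z ∈ tsupport ψ, x - y - z ∈ V) :
    convol (convol F φ) ψ x = convol (convol F ψ) φ x := by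
  set J : Euc N → Euc N → ℝ := fun z y => F (x - z - y) * (ψ z * φ y) with hJ
  have hcont : Continuous (Function.uncurry J) := by
    apply cont_glue (A := {p : Euc N × Euc N | x - p.1 - p.2 ∈ V})
      (C := tsupport ψ ×ˢ tsupport φ)
    · exact hV.preimage (by fun_prop)
    · exact (isClosed_tsupport ψ).prod (isClosed_tsupport φ)
    · rintro ⟨z, y⟩ ⟨hz, hy⟩
      have := hx y hy z hz
      show x - z - y ∈ V
      rwa [sub_right_comm]
    · exact (hF.comp (by fun_prop : Continuous fun p : Euc N × Euc N => x - p.1 - p.2).continuousOn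
        (fun p hp => hp)).mul ((hψc.comp continuous_fst).mul (hφc.comp continuous_snd)).continuousOn
    · rintro ⟨z, y⟩ hp
      rw [Set.mem_prod] at hp
      push_neg at hp
      show F (x - z - y) * (ψ z * φ y) = 0
      by_cases hz : z ∈ tsupport ψ
      · rw [image_eq_zero_of_notMem_tsupport (hp hz), mul_zero, mul_zero]
      · rw [image_eq_zero_of_notMem_tsupport hz, zero_mul, mul_zero]
  have hsupp : HasCompactSupport (Function.uncurry J) := by
    apply HasCompactSupport.intro (hψs.prod hφs)
    rintro ⟨z, y⟩ hp
    rw [Set.mem_prod] at hp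
    push_neg at hp
    show F (x - z - y) * (ψ z * φ y) = 0
    by_cases hz : z ∈ tsupport ψ
    · rw [image_eq_zero_of_notMem_tsupport (hp hz), mul_zero, mul_zero]
    · rw [image_eq_zero_of_notMem_tsupport hz, zero_mul, mul_zero]
  have hint : Integrable (Function.uncurry J) ((volume : Measure (Euc N)).prod volume) := by
    rw [← MeasureTheory.Measure.volume_eq_prod]
    exact hcont.integrable_of_hasCompactSupport hsupp
  have swap := integral_integral_swap hint
  calc convol (convol F φ) ψ x
      = ∫ z, (∫ y, F (x - z - y) * φ y) * ψ z := rfl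
    _ = ∫ z, ∫ y, J z y := by
        congr 1; funext z
        rw [← integral_mul_const]
        congr 1; funext y
        show F (x - z - y) * φ y * ψ z = F (x - z - y) * (ψ z * φ y)
        ring
    _ = ∫ y, ∫ z, J z y := swap
    _ = ∫ y, (∫ z, F (x - y - z) * ψ z) * φ y := by
        congr 1; funext y
        rw [← integral_mul_const]
        congr 1; funext z
        show F (x - z - y) * (ψ z * φ y) = F (x - y - z) * ψ z * φ y
        rw [sub_right_comm]; ring
    _ = convol (convol F ψ) φ x := rfl

/-- Lemma on continuous extensions: given an increasing exhaustion `(U_n)` of `U`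
with `closure (U_n) ⋐ U_{n+1}`, and `(f_k) ∈ 𝒜(U)`, there is a delta sequence
`(φ_n)` such that each `F∗φ_n` is (equal, as a Boehmian on `U_n`, to) a function
`h_n` continuous on `closure (U_n)`; and any sequence `(g_n) ⊆ 𝒞(U)` of
extensions of the `h_n` is fundamental on `U` with `(g_n) ∼ (f_k)`. -/
theorem contex {N : ℕ} (U : Set (Euc N)) (hU : IsOpen U)
    (Useq : ℕ → Set (Euc N)) (hopen : ∀ n, IsOpen (Useq n))
    (hmono : ∀ n, Useq n ⊆ Useq (n + 1))
    (hcomp : ∀ n, IsCompact (closure (Useq n)))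
    (hcl : ∀ n, closure (Useq n) ⊆ Useq (n + 1))
    (hunion : (⋃ n, Useq n) = U)
    (f : ℕ → Euc N → ℝ) (hf : IsFundamental f U) :
    ∃ (φ : ℕ → Euc N → ℝ) (h : ℕ → Euc N → ℝ), IsDeltaSeq φ ∧
      (∀ n, ContinuousOn (h n) (closure (Useq n)) ∧
        SimTo (fun k => convol (f k) (φ n)) (fun _ => h n) (Useq n)) ∧
      ∀ g : ℕ → Euc N → ℝ, (∀ n, ContinuousOn (g n) U) →
        (∀ n, ∀ x ∈ closure (Useq n), g n x = h n x) →
        IsFundamental g U ∧ SimTo g f U := by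
  classical
  obtain ⟨hfc, hff⟩ := hf
  set C : ℕ → Set (Euc N) := fun n => closure (Useq n) with hCdef
  have Umono : ∀ {a b : ℕ}, a ≤ b → Useq a ⊆ Useq b := fun {a b} hab =>
    monotone_nat_of_le_succ hmono hab
  have UsubU : ∀ n, Useq n ⊆ U := fun n => hunion ▸ Set.subset_iUnion Useq n
  have CsubU : ∀ n, C n ⊆ U := fun n => (hcl n).trans (UsubU (n + 1))
  have CsubC : ∀ {a b : ℕ}, a ≤ b → C a ⊆ C b := fun {a b} hab => closure_mono (Umono hab)
  have UsubC : ∀ n, Useq n ⊆ C n := fun n => subset_closure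
  have UsubC1 : ∀ n, Useq n ⊆ C (n + 1) := fun n => (Umono (Nat.le_succ n)).trans (UsubC (n + 1))
  -- margins around C (n+1)
  have hεex : ∀ n, ∃ e, 0 < e ∧ cthickening e (C (n + 1)) ⊆ Useq (n + 2) :=
    fun n => (hcomp (n + 1)).exists_cthickening_subset_open (hopen (n + 2)) (hcl (n + 1))
  choose εf hε0 hεsub using hεex
  -- fundamental data of f on each C (n+1)
  have happ : ∀ n, ∃ δ, IsDeltaSeq δ ∧ ∃ m₀ : ℕ, ∀ m ≥ m₀, ∃ gl,
      TendstoUniformlyOn (fun k => convol (f k) (δ m)) gl atTop (C (n + 1)) :=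
    fun n => hff (C (n + 1)) (hcomp (n + 1)) (CsubU (n + 1))
  choose δs hδs m₀ H using happ
  set G : ℕ → ℕ → Euc N → ℝ := fun n m => if h : m₀ n ≤ m then (H n m h).choose else 0 with hGdef
  have hG : ∀ n m, (h : m₀ n ≤ m) →
      TendstoUniformlyOn (fun k => convol (f k) (δs n m)) (G n m) atTop (C (n + 1)) := by
    intro n m hle
    simp only [hGdef, dif_pos hle]
    exact (H n m hle).choose_spec
  -- choose indices giving small supports
  have hsel : ∀ n, ∃ m, m₀ n ≤ m ∧ sRad (δs n m) < min (εf n) (1 / ((n : ℝ) + 1)) := by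
    intro n
    have hpos : (0 : ℝ) < min (εf n) (1 / ((n : ℝ) + 1)) := lt_min (hε0 n) (by positivity)
    have hev := (hδs n).2.eventually_lt_const hpos
    rw [eventually_atTop] at hev
    obtain ⟨a, ha⟩ := hev
    exact ⟨max a (m₀ n), le_max_right _ _, ha _ (le_max_left _ _)⟩
  choose ms hms1 hms2 using hsel
  set φ : ℕ → Euc N → ℝ := fun n => δs n (ms n) with hφdef
  set h : ℕ → Euc N → ℝ := fun n => G n (ms n) with hhdef
  have hφD0 : ∀ n, IsD0 (φ n) := fun n => (hδs n).1 (ms n)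
  have hδD0 : ∀ n m, IsD0 (δs n m) := fun n m => (hδs n).1 m
  have hφlim : ∀ n, TendstoUniformlyOn (fun k => convol (f k) (φ n)) (h n) atTop (C (n + 1)) :=
    fun n => hG n (ms n) (hms1 n)
  have hφrad : ∀ n, sRad (φ n) < min (εf n) (1 / ((n : ℝ) + 1)) := fun n => hms2 n
  have hφsupp : ∀ n, tsupport (φ n) ⊆ ball 0 (εf n) :=
    fun n => tsupport_subset_ball (hφD0 n).1.2 ((hφrad n).trans_le (min_le_left _ _))
  have hφdelta : IsDeltaSeq φ := by
    refine ⟨hφD0, ?_⟩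
    apply squeeze_zero (fun n => sRad_nonneg _)
      (fun n => ((hφrad n).trans_le (min_le_right _ _)).le)
    exact tendsto_one_div_add_atTop_nhds_zero_nat
  -- continuity of convolutions of f with small test functions
  have hcontd : ∀ n m k, tsupport (δs n m) ⊆ ball 0 (εf n) →
      ContinuousOn (convol (f k) (δs n m)) (C (n + 1)) := by
    intro n m k hsup
    apply convol_continuousOn hU (hfc k) (hδD0 n m).1.1.continuous (hδD0 n m).1.2
      (hδD0 n m).2.1 (hδD0 n m).2.2 (hε0 n) hsup
    intro x hx z hz
    exact UsubU _ (hεsub n (mem_cthickening_of_dist_le z x (εf n) _ hx hz))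
  have hcont : ∀ n k, ContinuousOn (convol (f k) (φ n)) (C (n + 1)) :=
    fun n k => hcontd n (ms n) k (hφsupp n)
  have hhcont : ∀ n, ContinuousOn (h n) (C (n + 1)) := fun n =>
    (hφlim n).continuousOn (Filter.Eventually.of_forall fun k => hcont n k).frequently
  -- exhaustion of compacts
  have hKn : ∀ K : Set (Euc N), IsCompact K → K ⊆ U → ∃ n₀, K ⊆ Useq n₀ := by
    intro K hK hKU
    obtain ⟨t, ht⟩ := hK.elim_finite_subcover Useq hopen (by rw [hunion]; exact hKU)
    refine ⟨t.sup id, fun x hx => ?_⟩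
    obtain ⟨i, hi, hxi⟩ := Set.mem_iUnion₂.mp (ht hx)
    exact Umono (Finset.le_sup (f := id) hi) hxi
  -- norm helper
  have hsubmem : ∀ (x y : Euc N) (ρ : ℝ) (K : Set (Euc N)), x ∈ K → ‖y‖ ≤ ρ →
      x - y ∈ cthickening ρ K := by
    intro x y ρ K hx hy
    apply mem_cthickening_of_dist_le (x - y) x ρ K hx
    rw [dist_eq_norm]
    have hxyx : x - y - x = -y := by abel
    rw [hxyx, norm_neg]
    exact hy
  refine ⟨φ, h, hφdelta, ?_, ?_⟩
  · -- goal B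
    intro n
    refine ⟨(hhcont n).mono (CsubC (Nat.le_succ n)), ?_⟩
    intro K hK hKU
    obtain ⟨ρ, hρ0, hρ⟩ := hK.exists_cthickening_subset_open (hopen n) hKU
    have hev : ∀ᶠ m in atTop, sRad (φ m) < ρ := hφdelta.2.eventually_lt_const hρ0
    rw [eventually_atTop] at hev
    obtain ⟨M₁, hM₁⟩ := hev
    refine ⟨φ, hφdelta, M₁, fun m hm => ?_⟩
    have hsupm : tsupport (φ m) ⊆ ball 0 ρ :=
      tsupport_subset_ball (hφD0 m).1.2 (hM₁ m hm)
    rw [Metric.tendstoUniformlyOn_iff]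
    intro ε hε
    have hlim := hφlim n
    rw [Metric.tendstoUniformlyOn_iff] at hlim
    filter_upwards [hlim (ε / 2) (by positivity)] with k hk
    intro x hx
    have hDcont : ContinuousOn (fun y => convol (f k) (φ n) y - h n y) (Useq n) :=
      ((hcont n k).mono (UsubC1 n)).sub ((hhcont n).mono (UsubC1 n))
    have hxmem : ∀ y ∈ tsupport (φ m), x - y ∈ Useq n := by
      intro y hy
      exact hρ (hsubmem x y ρ K hx (mem_ball_zero_iff.mp (hsupm hy)).le)
    have hint := integrand_integrable (hopen n) hDcont (hφD0 m).1.1.continuous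
      (hφD0 m).1.2 hxmem
    have hb : |convol (fun y => convol (f k) (φ n) y - h n y) (φ m) x| ≤ ε / 2 := by
      apply abs_convol_le (hφD0 m).1.1.continuous (hφD0 m).1.2 (hφD0 m).2.1 (hφD0 m).2.2
        hint (by positivity)
      intro y hy
      have hxy : x - y ∈ C (n + 1) := UsubC1 n (hxmem y hy)
      have := hk (x - y) hxy
      rw [Real.dist_eq] at this
      rw [abs_sub_comm]
      exact this.le
    have h0 : (0 : Euc N → ℝ) x = 0 := rfl
    rw [h0, Real.dist_eq, abs_sub_comm, sub_zero]
    exact lt_of_le_of_lt hb (by linarith)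
  · -- goal C
    intro g hgU hgh
    have master : ∀ K : Set (Euc N), IsCompact K → K ⊆ U →
        ∃ (δ : ℕ → Euc N → ℝ) (Gm : ℕ → Euc N → ℝ) (m₁ : ℕ), IsDeltaSeq δ ∧
          ∀ m ≥ m₁, (∀ x ∈ K, ∀ y ∈ tsupport (δ m), x - y ∈ U) ∧
            TendstoUniformlyOn (fun k => convol (f k) (δ m)) (Gm m) atTop K ∧
            TendstoUniformlyOn (fun n => convol (g n) (δ m)) (Gm m) atTop K := by
      intro K hK hKU
      obtain ⟨n₀, hn₀⟩ := hKn K hK hKU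
      obtain ⟨ρ, hρ0, hρ⟩ := hK.exists_cthickening_subset_open (hopen n₀) hn₀
      have hKC : K ⊆ C (n₀ + 1) := hn₀.trans (UsubC1 n₀)
      have hevm : ∀ᶠ m in atTop, sRad (δs n₀ m) < min (ρ / 2) (εf n₀) :=
        (hδs n₀).2.eventually_lt_const (lt_min (by positivity) (hε0 n₀))
      rw [eventually_atTop] at hevm
      obtain ⟨M₂, hM₂⟩ := hevm
      refine ⟨δs n₀, G n₀, max (m₀ n₀) M₂, hδs n₀, fun m hm => ?_⟩
      have hm1 : m₀ n₀ ≤ m := le_trans (le_max_left _ _) hm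
      have hm2 : sRad (δs n₀ m) < min (ρ / 2) (εf n₀) := hM₂ m (le_trans (le_max_right _ _) hm)
      have hψD0 : IsD0 (δs n₀ m) := hδD0 n₀ m
      have hψcont : Continuous (δs n₀ m) := hψD0.1.1.continuous
      have hsupδ : tsupport (δs n₀ m) ⊆ ball 0 (ρ / 2) :=
        tsupport_subset_ball hψD0.1.2 (hm2.trans_le (min_le_left _ _))
      have hsupδε : tsupport (δs n₀ m) ⊆ ball 0 (εf n₀) :=
        tsupport_subset_ball hψD0.1.2 (hm2.trans_le (min_le_right _ _))
      have hmemρ : ∀ x ∈ K, ∀ y : Euc N, ‖y‖ ≤ ρ → x - y ∈ Useq n₀ :=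
        fun x hx y hy => hρ (hsubmem x y ρ K hx hy)
      have hKUs : ∀ x ∈ K, ∀ y ∈ tsupport (δs n₀ m), x - y ∈ U := by
        intro x hx y hy
        have := mem_ball_zero_iff.mp (hsupδ hy)
        exact UsubU n₀ (hmemρ x hx y (by linarith))
      refine ⟨hKUs, (hG n₀ m hm1).mono hKC, ?_⟩
      have hGcont : ContinuousOn (G n₀ m) (C (n₀ + 1)) :=
        (hG n₀ m hm1).continuousOn (Filter.Eventually.of_forall fun k => hcontd n₀ m k hsupδε).frequently
      rw [Metric.tendstoUniformlyOn_iff]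
      intro ε hε
      obtain ⟨η, hη0, hηap⟩ := convol_approx (hopen (n₀ + 1))
        (hGcont.mono (UsubC (n₀ + 1))) hK hρ0
        (fun x hx z hz => Umono (Nat.le_succ n₀) (hρ (mem_cthickening_of_dist_le z x ρ K hx hz)))
        (half_pos hε)
      have hevn1 : ∀ᶠ n in atTop, sRad (φ n) < min ρ η :=
        hφdelta.2.eventually_lt_const (lt_min hρ0 hη0)
      have hevn2 : ∀ᶠ n in atTop, sRad (φ n) < ρ / 2 :=
        hφdelta.2.eventually_lt_const (by positivity)
      filter_upwards [hevn1, hevn2, eventually_ge_atTop n₀] with n hr1 hr2 hn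
      intro x hx
      have hsupφρ : tsupport (φ n) ⊆ ball 0 (ρ / 2) :=
        tsupport_subset_ball (hφD0 n).1.2 hr2
      have hmemn₀ : ∀ y ∈ tsupport (δs n₀ m), x - y ∈ Useq n₀ := by
        intro y hy
        have := mem_ball_zero_iff.mp (hsupδ hy)
        exact hmemρ x hx y (by linarith)
      have hmemφn₀ : ∀ y ∈ tsupport (φ n), x - y ∈ Useq n₀ := by
        intro y hy
        have := mem_ball_zero_iff.mp (hsupφρ hy)
        exact hmemρ x hx y (by linarith)
      -- step 1 : g can be replaced by h
      have e1 : convol (g n) (δs n₀ m) x = convol (h n) (δs n₀ m) x := by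
        apply convol_congr
        intro y hy
        have hyts : y ∈ tsupport (δs n₀ m) := subset_tsupport _ hy
        have hmem : x - y ∈ Useq n := Umono hn (hmemn₀ y hyts)
        exact hgh n (x - y) (UsubC n hmem)
      -- step 2 : h n ∗ δ m = G m ∗ φ n at x
      have e2 : convol (h n) (δs n₀ m) x = convol (G n₀ m) (φ n) x := by
        have ta : Tendsto (fun k => convol (convol (f k) (φ n)) (δs n₀ m) x) atTop
            (𝓝 (convol (h n) (δs n₀ m) x)) := by
          apply tendsto_convol_of_unif (hopen (n + 1))
            (fun k => (hcont n k).mono (UsubC (n + 1))) ((hhcont n).mono (UsubC (n + 1)))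
            (hφlim n) hψcont hψD0.1.2 hψD0.2.1 hψD0.2.2
          intro y hy
          have hxy : x - y ∈ Useq n₀ := hmemn₀ y hy
          exact ⟨Umono (by omega) hxy, UsubC (n + 1) (Umono (by omega) hxy)⟩
        have heqk : ∀ k, convol (convol (f k) (φ n)) (δs n₀ m) x
            = convol (convol (f k) (δs n₀ m)) (φ n) x := by
          intro k
          apply convol_convol_comm hU (hfc k) (hφD0 n).1.1.continuous (hφD0 n).1.2
            hψcont hψD0.1.2
          intro y hy z hz
          have h1 : ‖y‖ < ρ / 2 := mem_ball_zero_iff.mp (hsupφρ hy)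
          have h2 : ‖z‖ < ρ / 2 := mem_ball_zero_iff.mp (hsupδ hz)
          rw [sub_sub]
          apply UsubU n₀
          apply hmemρ x hx (y + z)
          calc ‖y + z‖ ≤ ‖y‖ + ‖z‖ := norm_add_le _ _
          _ ≤ ρ := by linarith
        have tc : Tendsto (fun k => convol (convol (f k) (δs n₀ m)) (φ n) x) atTop
            (𝓝 (convol (G n₀ m) (φ n) x)) := by
          apply tendsto_convol_of_unif (hopen (n₀ + 1))
            (fun k => (hcontd n₀ m k hsupδε).mono (UsubC (n₀ + 1)))
            (hGcont.mono (UsubC (n₀ + 1))) (hG n₀ m hm1)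
            (hφD0 n).1.1.continuous (hφD0 n).1.2 (hφD0 n).2.1 (hφD0 n).2.2
          intro y hy
          have hxy : x - y ∈ Useq n₀ := hmemφn₀ y hy
          exact ⟨Umono (Nat.le_succ n₀) hxy, UsubC (n₀ + 1) (Umono (Nat.le_succ n₀) hxy)⟩
        have tb : Tendsto (fun k => convol (convol (f k) (φ n)) (δs n₀ m) x) atTop
            (𝓝 (convol (G n₀ m) (φ n) x)) := tc.congr fun k => (heqk k).symm
        exact tendsto_nhds_unique ta tb
      -- step 3 : mollifier approximation
      have e3 : |convol (G n₀ m) (φ n) x - G n₀ m x| ≤ ε / 2 :=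
        hηap (φ n) (hφD0 n).1.1.continuous (hφD0 n).1.2 (hφD0 n).2.1 (hφD0 n).2.2
          (tsupport_subset_ball (hφD0 n).1.2 hr1) x hx
      rw [Real.dist_eq, e1, e2, abs_sub_comm]
      exact lt_of_le_of_lt e3 (by linarith)
    constructor
    · refine ⟨hgU, fun K hK hKU => ?_⟩
      obtain ⟨δ, Gm, m₁, hδ, hprop⟩ := master K hK hKU
      exact ⟨δ, hδ, m₁, fun m hm => ⟨Gm m, (hprop m hm).2.2⟩⟩
    · intro K hK hKU
      obtain ⟨δ, Gm, m₁, hδ, hprop⟩ := master K hK hKU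
      refine ⟨δ, hδ, m₁, fun m hm => ?_⟩
      obtain ⟨hmem, hfl, hgl⟩ := hprop m hm
      have hδD0' : IsD0 (δ m) := hδ.1 m
      rw [Metric.tendstoUniformlyOn_iff]
      intro ε hε
      rw [Metric.tendstoUniformlyOn_iff] at hfl hgl
      filter_upwards [hfl (ε / 2) (by positivity), hgl (ε / 2) (by positivity)] with n hfn hgn
      intro x hx
      have hintg := integrand_integrable hU (hgU n) hδD0'.1.1.continuous hδD0'.1.2
        (fun y hy => hmem x hx y hy)
      have hintf := integrand_integrable hU (hfc n) hδD0'.1.1.continuous hδD0'.1.2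
        (fun y hy => hmem x hx y hy)
      have hsplit : convol (fun y => g n y - f n y) (δ m) x
          = convol (g n) (δ m) x - convol (f n) (δ m) x := convol_sub hintg hintf
      have h0 : (0 : Euc N → ℝ) x = 0 := rfl
      rw [h0, Real.dist_eq, hsplit]
      have h1 := hgn x hx
      have h2 := hfn x hx
      rw [Real.dist_eq] at h1 h2
      have : |convol (g n) (δ m) x - convol (f n) (δ m) x| ≤
          |Gm m x - convol (g n) (δ m) x| + |Gm m x - convol (f n) (δ m) x| := by
        rw [abs_sub_comm (Gm m x)]
        have := abs_sub_le (convol (g n) (δ m) x) (Gm m x) (convol (f n) (δ m) x)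
        linarith [this]
      rw [abs_sub_comm, sub_zero]
      calc |convol (g n) (δ m) x - convol (f n) (δ m) x| ≤ _ := this
      _ < ε := by linarith
end
end
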